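/- Let (V,S) be a volume space over Z = F[t] (F a finite field), and let W₁, W₂ be finitely generated Z-submodules of V. Then logvol_{W₁∩W₂}(S) + logvol_{W₁+W₂}(S) ≤ logvol_{W₁}(S) + logvol_{W₂}(S). -/

import Mathlib

set_option synthInstance.maxHeartbeats 1000000
set_option maxHeartbeats 1000000

/-- The valuation ring of the valuation `ν(p/q) = deg q - deg p` on `F(t)`,
i.e. rational functions of nonpositive `intDegree`. -/
noncomputable def valR (F : Type*) [Field F] : Subring (RatFunc F) where
  carrier := {x | x.intDegree ≤ 0}
  zero_mem' := by simp [Set.mem_setOf_eq, RatFunc.intDegree_zero]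
  one_mem' := by simp [Set.mem_setOf_eq, RatFunc.intDegree_one]
  add_mem' := by
    intro a b ha hb
    rcases eq_or_ne b 0 with rfl | hb0
    · simpa using ha
    rcases eq_or_ne (a + b) 0 with h | h
    · simp [Set.mem_setOf_eq, h, RatFunc.intDegree_zero]
    · simp only [Set.mem_setOf_eq] at ha hb ⊢
      exact le_trans (RatFunc.intDegree_add_le hb0 h) (sup_le ha hb)
  mul_mem' := by
    intro a b ha hb
    rcases eq_or_ne a 0 with rfl | ha0
    · simp [Set.mem_setOf_eq, RatFunc.intDegree_zero]
    rcases eq_or_ne b 0 with rfl | hb0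
    · simp [Set.mem_setOf_eq, RatFunc.intDegree_zero]
    · simp only [Set.mem_setOf_eq] at ha hb ⊢
      rw [RatFunc.intDegree_mul ha0 hb0]
      omega
  neg_mem' := by
    intro a ha
    simpa [Set.mem_setOf_eq, RatFunc.intDegree_neg] using ha

/-- `v` is the logarithmic volume of the `F[t]`-submodule `W` with respect to the
lattice basis family `B`: writing a wedge of any basis of `W` in terms of wedges of
the `B j`, it is the maximum of `-ν` (that is, `intDegree`) of the nonzero minors of
the coefficient matrix. -/
def IsLogVolume (F : Type*) [Field F] {M : Type*} [AddCommGroup M]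
    [Module (RatFunc F) M] [Module (Polynomial F) M]
    {ι : Type*} [Fintype ι] [DecidableEq ι] (B : ι → M)
    (W : Submodule (Polynomial F) M) (v : ℝ) : Prop :=
  ∀ (m : ℕ) (b : Module.Basis (Fin m) (Polynomial F) W) (lam : Matrix (Fin m) ι (RatFunc F)),
    (∀ i, (b i : M) = ∑ j, lam i j • B j) →
    v = sSup {x : ℝ | ∃ g : Fin m ↪ ι,
      (lam.submatrix id ⇑g).det ≠ 0 ∧ x = (((lam.submatrix id ⇑g).det.intDegree : ℤ) : ℝ)}

/-!
In coordinates with respect to the `F(t)`-basis given by `S`, `logvol_W(S)` is the largest degree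
of a nonzero maximal minor of the matrix of an `F[t]`-basis of `W`. It does not depend on that
basis, since a change of basis multiplies the matrix by one of unit determinant.

Since `W₁ + W₂` is free, `0 → W₁ ∩ W₂ → W₁ × W₂ → W₁ + W₂ → 0` (maps `u ↦ (u, u)` and
`(x, y) ↦ x - y`) splits. Embed `W₁ × W₂` in `V × V` by `(x, y) ↦ (x - y, y)`. In a basis adapted
to the splitting the rows are `(0, u)` and `(s, *)`, so there is a block triangular maximal minor
of degree `logvol (W₁ ∩ W₂) + logvol (W₁ + W₂)`. In the basis coming from `W₁` and `W₂` the
matrix is `[[A, 0], [-B, B]]`. Write `A = A₀ E` and `B = B₀ E'`, where `A₀`, `B₀` are maximal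
minors of largest degree and `E`, `E'` have entries in the valuation ring (Cramer's rule). Then
every maximal minor has degree at most `deg det A₀ + deg det B₀ = logvol W₁ + logvol W₂`.
-/

open Matrix Polynomial

section MaxMinors

variable {F : Type*} [Field F] {ρ ι : Type*} [Fintype ρ] [DecidableEq ρ]

def maxMinorDegrees (M : Matrix ρ ι (RatFunc F)) : Set ℝ :=
  {x | ∃ g : ρ ↪ ι, (M.submatrix id g).det ≠ 0 ∧ x = ((M.submatrix id g).det.intDegree : ℝ)}

noncomputable def maxMinorDegree (M : Matrix ρ ι (RatFunc F)) : ℝ :=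
  sSup (maxMinorDegrees M)

theorem maxMinorDegrees_finite [Finite ι] (M : Matrix ρ ι (RatFunc F)) :
    (maxMinorDegrees M).Finite :=
  (Set.finite_range fun g : ρ ↪ ι => ((M.submatrix id g).det.intDegree : ℝ)).subset
    fun _ ⟨g, _, hx⟩ => ⟨g, hx.symm⟩

theorem det_mul_submatrix (C : Matrix ρ ρ (RatFunc F)) (M : Matrix ρ ι (RatFunc F)) (φ : ρ → ι) :
    ((C * M).submatrix id φ).det = C.det * (M.submatrix id φ).det := by
  rw [submatrix_mul _ _ _ id _ Function.bijective_id, submatrix_id_id, det_mul]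

theorem maxMinorDegrees_unimodular_mul (C : Matrix ρ ρ F[X]) (hC : IsUnit C.det)
    (M : Matrix ρ ι (RatFunc F)) :
    maxMinorDegrees (C.map (algebraMap _ (RatFunc F)) * M) = maxMinorDegrees M := by
  have hdet : (C.map (algebraMap _ (RatFunc F))).det = algebraMap _ _ C.det :=
    (RingHom.map_det _ C).symm
  have hne : (C.map (algebraMap _ (RatFunc F))).det ≠ 0 := by
    rw [hdet]; exact RatFunc.algebraMap_ne_zero hC.ne_zero
  have hdeg : (C.map (algebraMap _ (RatFunc F))).det.intDegree = 0 := by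
    rw [hdet, RatFunc.intDegree_polynomial, Polynomial.natDegree_eq_zero_of_isUnit hC,
      Nat.cast_zero]
  ext x
  refine exists_congr fun g => ?_
  rw [det_mul_submatrix, mul_ne_zero_iff, and_iff_right hne]
  refine and_congr_right fun hg => ?_
  rw [RatFunc.intDegree_mul hne hg, hdeg, zero_add]

theorem maxMinorDegrees_submatrix_equiv {ρ' : Type*} [Fintype ρ'] [DecidableEq ρ'] (e : ρ' ≃ ρ)
    (M : Matrix ρ ι (RatFunc F)) :
    maxMinorDegrees (M.submatrix e id) = maxMinorDegrees M := by
  have key : ∀ g : ρ ↪ ι, ((M.submatrix e id).submatrix id (e.toEmbedding.trans g)).det =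
      (M.submatrix id g).det := fun g => by
    rw [← det_submatrix_equiv_self e (M.submatrix id g)]
    rfl
  ext x
  constructor
  · rintro ⟨g, hg, rfl⟩
    have hg' : g = e.toEmbedding.trans (e.symm.toEmbedding.trans g) := by ext; simp
    rw [hg', key] at hg ⊢
    exact ⟨_, hg, rfl⟩
  · rintro ⟨g, hg, rfl⟩
    rw [← key] at hg ⊢
    exact ⟨_, hg, rfl⟩

theorem le_intDegree_det_of_mem_maxMinorDegrees_mul {C : Matrix ρ ρ (RatFunc F)}
    {E : Matrix ρ ι (valR F)} {x : ℝ}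
    (hx : x ∈ maxMinorDegrees (C * E.map (valR F).subtype)) : x ≤ C.det.intDegree := by
  obtain ⟨g, hg, rfl⟩ := hx
  have hE : ((E.map (valR F).subtype).submatrix id g).det = (E.submatrix id g).det :=
    ((valR F).subtype.map_det _).symm
  rw [det_mul_submatrix, hE] at hg ⊢
  rw [RatFunc.intDegree_mul (left_ne_zero_of_mul hg) (right_ne_zero_of_mul hg)]
  have : ((E.submatrix id g).det : RatFunc F).intDegree ≤ 0 := (E.submatrix id g).det.2
  exact Int.cast_le.mpr (by omega)

variable {M : Matrix ρ ι (RatFunc F)}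

theorem le_maxMinorDegree [Finite ι] {x : ℝ} (hx : x ∈ maxMinorDegrees M) :
    x ≤ maxMinorDegree M :=
  le_csSup (maxMinorDegrees_finite M).bddAbove hx

theorem maxMinorDegree_mem [Finite ι] (hM : (maxMinorDegrees M).Nonempty) :
    maxMinorDegree M ∈ maxMinorDegrees M :=
  hM.csSup_mem (maxMinorDegrees_finite M)

theorem intDegree_det_submatrix_le [Finite ι] {φ : ρ → ι} (hφ : (M.submatrix id φ).det ≠ 0) :
    ((M.submatrix id φ).det.intDegree : ℝ) ≤ maxMinorDegree M := by
  have hinj : Function.Injective φ := fun i j hij => by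
    by_contra hne
    exact hφ (det_zero_of_column_eq hne fun k => by simp [hij])
  exact le_maxMinorDegree ⟨⟨φ, hinj⟩, hφ, rfl⟩

theorem maxMinorDegrees_nonempty [Fintype ι] (hM : LinearIndependent (RatFunc F) M.row) :
    (maxMinorDegrees M).Nonempty := by
  obtain ⟨κ, a, ha, hspan, hli⟩ := exists_linearIndependent' (RatFunc F) M.col
  have : Fintype κ := Fintype.ofInjective a ha
  have hcard : Fintype.card κ = Fintype.card ρ := by
    rw [← hM.rank_matrix, rank_eq_finrank_span_cols, ← hspan,
      finrank_span_eq_card hli]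
  let g : ρ ↪ ι := (Fintype.equivOfCardEq hcard).symm.toEmbedding.trans ⟨a, ha⟩
  have hg : (M.submatrix id g).det ≠ 0 := by
    rw [← isUnit_iff_ne_zero, ← isUnit_iff_isUnit_det, ← linearIndependent_cols_iff_isUnit]
    exact hli.comp _ (Fintype.equivOfCardEq hcard).symm.injective
  exact ⟨_, g, hg, rfl⟩

theorem exists_eq_maxMinor_mul [Finite ι] (hM : (maxMinorDegrees M).Nonempty) :
    ∃ (g : ρ ↪ ι) (E : Matrix ρ ι (valR F)),
      M = M.submatrix id g * E.map (valR F).subtype ∧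
        ((M.submatrix id g).det.intDegree : ℝ) = maxMinorDegree M := by
  obtain ⟨g, hg, hdeg⟩ := maxMinorDegree_mem hM
  set A := M.submatrix id g
  have hA : IsUnit A.det := isUnit_iff_ne_zero.mpr hg
  -- Cramer's rule: the entries of `A⁻¹ * M` are maximal minors of `M` divided by `det A`.
  have hentry : ∀ i j, (A⁻¹ * M) i j ∈ valR F := fun i j => by
    have hcol : A.updateCol i (fun k => M k j) = M.submatrix id (Function.update g i j) := by
      ext k l
      by_cases hl : l = i <;> simp [A, hl]
    have : (A⁻¹ * M) i j = A.det⁻¹ * (M.submatrix id (Function.update g i j)).det := by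
      rw [inv_def, Ring.inverse_eq_inv', Matrix.smul_mul, Matrix.smul_apply, smul_eq_mul, ← hcol,
        ← cramer_apply, cramer_eq_adjugate_mulVec]
      rfl
    rw [this]
    rcases eq_or_ne (M.submatrix id (Function.update g i j)).det 0 with h0 | h0
    · rw [h0, mul_zero]; exact zero_mem _
    · have hle := intDegree_det_submatrix_le h0
      rw [hdeg] at hle
      change (A.det⁻¹ * _).intDegree ≤ 0
      rw [RatFunc.intDegree_mul (inv_ne_zero hg) h0, RatFunc.intDegree_inv]
      have : (M.submatrix id (Function.update g i j)).det.intDegree ≤ A.det.intDegree := by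
        exact_mod_cast hle
      omega
  refine ⟨g, Matrix.of fun i j => ⟨_, hentry i j⟩, ?_, hdeg.symm⟩
  change M = A * (A⁻¹ * M)
  rw [← Matrix.mul_assoc, mul_nonsing_inv _ hA, Matrix.one_mul]

theorem le_of_mem_maxMinorDegrees_fromBlocks {ρ₁ ρ₂ ι₁ ι₂ : Type*} [Fintype ρ₁] [Fintype ρ₂]
    [DecidableEq ρ₁] [DecidableEq ρ₂] [Fintype ι₁] [Fintype ι₂]
    {A : Matrix ρ₁ ι₁ (RatFunc F)} {B : Matrix ρ₂ ι₂ (RatFunc F)} (N : Matrix ι₂ ι₁ (valR F))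
    (hA : (maxMinorDegrees A).Nonempty) (hB : (maxMinorDegrees B).Nonempty) {x : ℝ}
    (hx : x ∈ maxMinorDegrees (fromBlocks A 0 (B * N.map (valR F).subtype) B)) :
    x ≤ maxMinorDegree A + maxMinorDegree B := by
  obtain ⟨gA, EA, hEA, hdegA⟩ := exists_eq_maxMinor_mul hA
  obtain ⟨gB, EB, hEB, hdegB⟩ := exists_eq_maxMinor_mul hB
  have hfactor : fromBlocks A 0 (B * N.map (valR F).subtype) B =
      fromBlocks (A.submatrix id gA) 0 0 (B.submatrix id gB) *
        (fromBlocks EA 0 (EB * N) EB).map (valR F).subtype := by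
    simp only [fromBlocks_map, fromBlocks_multiply, Matrix.map_mul, Matrix.zero_mul, zero_add,
      add_zero, ← Matrix.mul_assoc, ← hEA, ← hEB]
    simp
  rw [hfactor] at hx
  have hdet := le_intDegree_det_of_mem_maxMinorDegrees_mul hx
  have hdet0 : (A.submatrix id gA).det ≠ 0 ∧ (B.submatrix id gB).det ≠ 0 := by
    obtain ⟨g, hg, -⟩ := hx
    rw [det_mul_submatrix, det_fromBlocks_zero₁₂] at hg
    exact mul_ne_zero_iff.mp (left_ne_zero_of_mul hg)
  rw [det_fromBlocks_zero₁₂, RatFunc.intDegree_mul hdet0.1 hdet0.2] at hdet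
  push_cast at hdet
  linarith

end MaxMinors

namespace Submodule

variable {R M : Type*} [Ring R] [AddCommGroup M] [Module R M] (W₁ W₂ : Submodule R M)

def shear : ↥W₁ × ↥W₂ →ₗ[R] M × M :=
  (W₁.subtype ∘ₗ LinearMap.fst R _ _ - W₂.subtype ∘ₗ LinearMap.snd R _ _).prod
    (W₂.subtype ∘ₗ LinearMap.snd R _ _)

theorem shear_apply (p : ↥W₁ × ↥W₂) : shear W₁ W₂ p = ((p.1 : M) - p.2, (p.2 : M)) := rfl

theorem shear_injective : Function.Injective (shear W₁ W₂) := by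
  intro p q h
  simp only [shear_apply, Prod.mk.injEq] at h
  obtain ⟨h₁, h₂⟩ := h
  rw [h₂, sub_left_inj] at h₁
  exact Prod.ext (Subtype.ext h₁) (Subtype.ext h₂)

theorem exists_prod_equiv_inf_prod_sup [Module.Projective R ↥(W₁ ⊔ W₂)] :
    ∃ e : (↥W₁ × ↥W₂) ≃ₗ[R] ↥(W₁ ⊓ W₂) × ↥(W₁ ⊔ W₂),
      (∀ u, shear W₁ W₂ (e.symm (u, 0)) = (0, (u : M))) ∧
        ∀ p, (shear W₁ W₂ (e.symm p)).1 = p.2 := by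
  let f : ↥(W₁ ⊓ W₂) →ₗ[R] ↥W₁ × ↥W₂ :=
    (inclusion inf_le_left).prod (inclusion inf_le_right)
  let g : ↥W₁ × ↥W₂ →ₗ[R] ↥(W₁ ⊔ W₂) :=
    inclusion le_sup_left ∘ₗ LinearMap.fst R _ _ - inclusion le_sup_right ∘ₗ LinearMap.snd R _ _
  have hf : Function.Injective f := fun u v h => Subtype.ext (congrArg (fun p => (p.1 : M)) h)
  have hexact : Function.Exact f g := by
    intro p
    constructor
    · intro h
      have hp : (p.1 : M) = p.2 := sub_eq_zero.mp (congrArg Subtype.val h)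
      exact ⟨⟨p.1, p.1.2, hp ▸ p.2.2⟩, Prod.ext rfl (Subtype.ext hp)⟩
    · rintro ⟨u, rfl⟩
      exact Subtype.ext (sub_self (u : M))
  have hg : Function.Surjective g := by
    rintro ⟨z, hz⟩
    obtain ⟨x, hx, y, hy, rfl⟩ := mem_sup.mp hz
    exact ⟨(⟨x, hx⟩, ⟨-y, neg_mem hy⟩), Subtype.ext (sub_neg_eq_add x y)⟩
  obtain ⟨l, hl⟩ := Module.projective_lifting_property g LinearMap.id hg
  let e := hexact.splitSurjectiveEquiv hf ⟨l, hl⟩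
  refine ⟨e.1, fun u => ?_, fun p => ?_⟩
  · have h := LinearMap.congr_fun e.2.1 u
    simp only [LinearMap.coe_comp, LinearEquiv.coe_coe, Function.comp_apply,
      LinearMap.inl_apply] at h
    simp [← h, f, shear_apply]
  · have h := LinearMap.congr_fun e.2.2 (e.1.symm p)
    simp only [LinearMap.coe_comp, LinearEquiv.coe_coe, Function.comp_apply,
      LinearEquiv.apply_symm_apply, LinearMap.snd_apply] at h
    exact congrArg Subtype.val h

end Submodule

section Lattices

variable {F : Type*} [Field F] {V : Type*} [AddCommGroup V] [Module (RatFunc F) V]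
  [Module F[X] V] [IsScalarTower F[X] (RatFunc F) V] {ι : Type*} [Fintype ι]
  (BK : Module.Basis ι (RatFunc F) V)

section CoordinateMatrix

variable {N : Type*} [AddCommGroup N] [Module F[X] N] (c : N →ₗ[F[X]] V)
  {ρ : Type*} [Fintype ρ] [DecidableEq ρ]

omit [Fintype ι] [DecidableEq ρ] in
theorem Module.Basis.toMatrix_comp_basis_eq_mul (b b' : Module.Basis ρ F[X] N) :
    (BK.toMatrix (c ∘ b'))ᵀ =
      (b.toMatrix b')ᵀ.map (algebraMap F[X] (RatFunc F)) * (BK.toMatrix (c ∘ b))ᵀ := by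
  ext i j
  conv_lhs => rw [transpose_apply, Module.Basis.toMatrix_apply, Function.comp_apply,
    ← b.sum_repr (b' i)]
  simp only [map_sum, map_smul, ← algebraMap_smul (RatFunc F) (b.repr (b' i) _),
    Finsupp.coe_finsetSum, Finset.sum_apply, Finsupp.smul_apply, smul_eq_mul, Matrix.mul_apply,
    Matrix.map_apply, transpose_apply, Module.Basis.toMatrix_apply, Function.comp_apply]

omit [Fintype ι] in
theorem maxMinorDegrees_toMatrix_basis_eq {ρ' : Type*} [Fintype ρ'] [DecidableEq ρ']
    (b : Module.Basis ρ F[X] N) (b' : Module.Basis ρ' F[X] N) :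
    maxMinorDegrees (BK.toMatrix (c ∘ b'))ᵀ = maxMinorDegrees (BK.toMatrix (c ∘ b))ᵀ := by
  let e := b'.indexEquiv b
  have hreindex : (BK.toMatrix (c ∘ b'))ᵀ = (BK.toMatrix (c ∘ b'.reindex e))ᵀ.submatrix e id := by
    ext i j; simp [Module.Basis.toMatrix_apply]
  rw [hreindex, maxMinorDegrees_submatrix_equiv, BK.toMatrix_comp_basis_eq_mul c b,
    maxMinorDegrees_unimodular_mul]
  have := b.invertibleToMatrix (b'.reindex e)
  rw [det_transpose]
  exact isUnit_det_of_invertible _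

theorem maxMinorDegrees_toMatrix_basis_nonempty (hc : Function.Injective c)
    (b : Module.Basis ρ F[X] N) : (maxMinorDegrees (BK.toMatrix (c ∘ b))ᵀ).Nonempty := by
  apply maxMinorDegrees_nonempty
  have hli : LinearIndependent (RatFunc F) (c ∘ b) :=
    (b.linearIndependent.map' c (LinearMap.ker_eq_bot.mpr hc)).localization (RatFunc F)
      (nonZeroDivisors F[X])
  have hrow : (BK.toMatrix (c ∘ b))ᵀ.row = BK.equivFun ∘ c ∘ b := by
    ext i j; simp [Module.Basis.toMatrix_apply]
  rw [hrow]
  exact hli.map' BK.equivFun.toLinearMap BK.equivFun.ker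

end CoordinateMatrix

variable {W₁ W₂ : Submodule F[X] V}
  {ρ₁ ρ₂ ρU ρS : Type*} [Fintype ρ₁] [Fintype ρ₂] [Fintype ρU] [Fintype ρS]
  [DecidableEq ρ₁] [DecidableEq ρ₂] [DecidableEq ρU] [DecidableEq ρS]

theorem maxMinorDegree_shear_prod_le [DecidableEq ι] (b₁ : Module.Basis ρ₁ F[X] W₁)
    (b₂ : Module.Basis ρ₂ F[X] W₂) :
    maxMinorDegree ((BK.prod BK).toMatrix (W₁.shear W₂ ∘ b₁.prod b₂))ᵀ ≤
      maxMinorDegree (BK.toMatrix (W₁.subtype ∘ b₁))ᵀ +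
        maxMinorDegree (BK.toMatrix (W₂.subtype ∘ b₂))ᵀ := by
  have hneg : (-1 : Matrix ι ι (valR F)).map (valR F).subtype = -1 := by
    rw [← RingHom.mapMatrix_apply, map_neg, map_one]
  have hblocks : ((BK.prod BK).toMatrix (W₁.shear W₂ ∘ b₁.prod b₂))ᵀ =
      fromBlocks (BK.toMatrix (W₁.subtype ∘ b₁))ᵀ 0
        ((BK.toMatrix (W₂.subtype ∘ b₂))ᵀ * (-1 : Matrix ι ι (valR F)).map (valR F).subtype)
        (BK.toMatrix (W₂.subtype ∘ b₂))ᵀ := by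
    rw [hneg, Matrix.mul_neg, Matrix.mul_one]
    ext (i | i) (j | j) <;> simp [Module.Basis.toMatrix_apply, Submodule.shear_apply]
  refine csSup_le (maxMinorDegrees_toMatrix_basis_nonempty _ _ (W₁.shear_injective W₂) _)
    fun x hx => le_of_mem_maxMinorDegrees_fromBlocks _ ?_ ?_ (hblocks ▸ hx)
  · exact maxMinorDegrees_toMatrix_basis_nonempty BK _ W₁.injective_subtype b₁
  · exact maxMinorDegrees_toMatrix_basis_nonempty BK _ W₂.injective_subtype b₂

theorem add_maxMinorDegree_le_shear {ρ : Type*} [Fintype ρ] [DecidableEq ρ]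
    (bU : Module.Basis ρU F[X] ↥(W₁ ⊓ W₂)) (bS : Module.Basis ρS F[X] ↥(W₁ ⊔ W₂))
    (b : Module.Basis ρ F[X] (↥W₁ × ↥W₂)) :
    maxMinorDegree (BK.toMatrix ((W₁ ⊓ W₂).subtype ∘ bU))ᵀ +
        maxMinorDegree (BK.toMatrix ((W₁ ⊔ W₂).subtype ∘ bS))ᵀ ≤
      maxMinorDegree ((BK.prod BK).toMatrix (W₁.shear W₂ ∘ b))ᵀ := by
  have := Module.Projective.of_basis bS
  obtain ⟨e, he_inf, he_sup⟩ := W₁.exists_prod_equiv_inf_prod_sup W₂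
  set Mf := ((BK.prod BK).toMatrix (W₁.shear W₂ ∘ (bU.prod bS).map e.symm))ᵀ
  obtain ⟨gU, hgU, hdegU⟩ := maxMinorDegree_mem
    (maxMinorDegrees_toMatrix_basis_nonempty BK _ (W₁ ⊓ W₂).injective_subtype bU)
  obtain ⟨gS, hgS, hdegS⟩ := maxMinorDegree_mem
    (maxMinorDegrees_toMatrix_basis_nonempty BK _ (W₁ ⊔ W₂).injective_subtype bS)
  let g : ρU ⊕ ρS ↪ ι ⊕ ι := (gU.sumMap gS).trans (Equiv.sumComm ι ι).toEmbedding
  have hminor : Mf.submatrix id g =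
      fromBlocks ((BK.toMatrix ((W₁ ⊓ W₂).subtype ∘ bU))ᵀ.submatrix id gU) 0
        (Matrix.of fun i j => BK.repr (W₁.shear W₂ (e.symm (0, bS i))).2 (gU j))
        ((BK.toMatrix ((W₁ ⊔ W₂).subtype ∘ bS))ᵀ.submatrix id gS) := by
    ext (i | i) (j | j) <;> simp [Mf, g, Module.Basis.toMatrix_apply, he_inf, he_sup]
  have hdet : (Mf.submatrix id g).det ≠ 0 := by
    rw [hminor, det_fromBlocks_zero₁₂]
    exact mul_ne_zero hgU hgS
  calc _ ≤ maxMinorDegree Mf := by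
        refine le_maxMinorDegree ⟨g, hdet, ?_⟩
        rw [hdegU, hdegS, hminor, det_fromBlocks_zero₁₂, RatFunc.intDegree_mul hgU hgS,
          Int.cast_add]
    _ = _ := congrArg sSup (maxMinorDegrees_toMatrix_basis_eq _ _ b _)

end Lattices

theorem IsLogVolume.eq_maxMinorDegree {F M ι : Type*} [Field F] [AddCommGroup M]
    [Module (RatFunc F) M] [Module F[X] M] [Fintype ι] [DecidableEq ι]
    {BK : Module.Basis ι (RatFunc F) M} {W : Submodule F[X] M} {l : ℝ}
    (hl : IsLogVolume F BK W l) {m : ℕ} (b : Module.Basis (Fin m) F[X] W) :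
    l = maxMinorDegree (BK.toMatrix (W.subtype ∘ b))ᵀ :=
  hl m b _ fun i => (BK.sum_toMatrix_smul_self (W.subtype ∘ b) i).symm

theorem logvol_subadditive_general (F : Type*) [Field F] (n : ℕ)
    (S : Submodule (valR F) (Fin n → RatFunc F))
    (B : Module.Basis (Fin n) (valR F) S)
    (hBspan : Submodule.span (RatFunc F)
      (Set.range (fun j => (B j : Fin n → RatFunc F))) = ⊤)
    (W₁ W₂ : Submodule (Polynomial F) (Fin n → RatFunc F))
    (h₁ : W₁.FG) (h₂ : W₂.FG)
    (l₁ l₂ li ls : ℝ)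
    (hl₁ : IsLogVolume F (fun j => (B j : Fin n → RatFunc F)) W₁ l₁)
    (hl₂ : IsLogVolume F (fun j => (B j : Fin n → RatFunc F)) W₂ l₂)
    (hli : IsLogVolume F (fun j => (B j : Fin n → RatFunc F)) (W₁ ⊓ W₂) li)
    (hls : IsLogVolume F (fun j => (B j : Fin n → RatFunc F)) (W₁ ⊔ W₂) ls) :
    li + ls ≤ l₁ + l₂ := by
  let BK := basisOfTopLeSpanOfCardEqFinrank _ hBspan.ge (by simp)
  have hBK : ⇑BK = fun j => (B j : Fin n → RatFunc F) := coe_basisOfTopLeSpanOfCardEqFinrank ..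
  rw [← hBK] at hl₁ hl₂ hli hls
  have := Module.Finite.iff_fg.mpr h₁
  have := Module.Finite.iff_fg.mpr h₂
  have := Module.Finite.iff_fg.mpr (h₁.sup h₂)
  have := Module.Finite.of_injective _ (Submodule.inclusion_injective (inf_le_left : W₁ ⊓ W₂ ≤ W₁))
  rw [hl₁.eq_maxMinorDegree (Module.basisOfFiniteTypeTorsionFree' (M := W₁)).2,
    hl₂.eq_maxMinorDegree (Module.basisOfFiniteTypeTorsionFree' (M := W₂)).2,
    hli.eq_maxMinorDegree (Module.basisOfFiniteTypeTorsionFree' (M := ↥(W₁ ⊓ W₂))).2,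
    hls.eq_maxMinorDegree (Module.basisOfFiniteTypeTorsionFree' (M := ↥(W₁ ⊔ W₂))).2]
  exact (add_maxMinorDegree_le_shear BK _ _ (.prod _ _)).trans (maxMinorDegree_shear_prod_le BK _ _)

/-- parallelogram constraint / subadditivity of the logarithmic volume in a
volume space over `Z = F[t]`: for finitely generated `Z`-submodules `W₁, W₂`,
`logvol_{W₁ ⊓ W₂}(S) + logvol_{W₁ + W₂}(S) ≤ logvol_{W₁}(S) + logvol_{W₂}(S)`. -/
theorem logvol_subadditive (F : Type*) [Field F] [Finite F] (n : ℕ)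
    (S : Submodule (valR F) (Fin n → RatFunc F))
    (B : Module.Basis (Fin n) (valR F) S)
    (hBspan : Submodule.span (RatFunc F)
      (Set.range (fun j => (B j : Fin n → RatFunc F))) = ⊤)
    (W₁ W₂ : Submodule (Polynomial F) (Fin n → RatFunc F))
    (h₁ : W₁.FG) (h₂ : W₂.FG)
    (l₁ l₂ li ls : ℝ)
    (hl₁ : IsLogVolume F (fun j => (B j : Fin n → RatFunc F)) W₁ l₁)
    (hl₂ : IsLogVolume F (fun j => (B j : Fin n → RatFunc F)) W₂ l₂)
    (hli : IsLogVolume F (fun j => (B j : Fin n → RatFunc F)) (W₁ ⊓ W₂) li)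
    (hls : IsLogVolume F (fun j => (B j : Fin n → RatFunc F)) (W₁ ⊔ W₂) ls) :
    li + ls ≤ l₁ + l₂ :=
  logvol_subadditive_general F n S B hBspan W₁ W₂ h₁ h₂ l₁ l₂ li ls hl₁ hl₂ hli hls
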